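/- The map Inv' on 2×2 density matrices, defined by Inv'(ρ) = (1/3)·Inv(ρ) + (2/3)·(I/2) where Inv maps [[u,v],[w,x]] to [[x,-v],[-w,u]], preserves positivity and trace (i.e., Inv'(ρ) is a density matrix whenever ρ is). -/

import Mathlib

open Matrix ComplexOrder

abbrev M2 := Matrix (Fin 2) (Fin 2) ℂ

def IsDensity {n : Type*} [Fintype n] [DecidableEq n] (ρ : Matrix n n ℂ) : Prop :=
  ρ.PosSemidef ∧ ρ.trace = 1

/-- The (non-CP) universal-NOT operation `uNOT`. -/
noncomputable def uNOT (ρ : M2) : M2 := !![ρ 1 1, -ρ 0 1; -ρ 1 0, ρ 0 0]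

/-- The approximated universal-NOT `uNOTapprox(ρ) = (1/3) uNOT(ρ) + (2/3) (I/2)`. -/
noncomputable def uNOTapprox (ρ : M2) : M2 :=
  (1 / 3 : ℂ) • uNOT ρ + (2 / 3 : ℂ) • ((1 / 2 : ℂ) • (1 : M2))

lemma psd_smul {n : Type*} [Fintype n] {A : Matrix n n ℂ} (hA : A.PosSemidef) {c : ℂ}
    (hc : 0 ≤ c) : (c • A).PosSemidef := by
  constructor
  · have him : c.im = 0 := ((Complex.le_def.mp hc).2).symm
    show (c • A)ᴴ = c • A
    rw [conjTranspose_smul, hA.1.eq]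
    congr 1
    exact Complex.conj_eq_iff_im.mpr him
  · intro x
    exact (hA.smul hc).2 x

lemma uNOT_eq (ρ : M2) : uNOT ρ = !![(0:ℂ),1;-1,0] * ρᵀ * !![(0:ℂ),1;-1,0]ᴴ := by
  ext i j
  fin_cases i <;> fin_cases j <;>
    simp [uNOT, Matrix.mul_apply, Fin.sum_univ_two, Matrix.conjTranspose_apply, Matrix.vecMul, dotProduct, Matrix.transpose_apply]

theorem inv'_preserves_density (ρ : M2) (hρ : IsDensity ρ) : IsDensity (uNOTapprox ρ) := by
  obtain ⟨hpsd, htr⟩ := hρ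
  constructor
  · apply Matrix.PosSemidef.add
    · apply psd_smul
      · rw [uNOT_eq]
        exact hpsd.transpose.mul_mul_conjTranspose_same _
      · norm_num [Complex.le_def]
    · apply psd_smul
      · exact psd_smul Matrix.PosSemidef.one (by norm_num [Complex.le_def])
      · norm_num [Complex.le_def]
  · have h : ρ 0 0 + ρ 1 1 = 1 := by
      simpa [Matrix.trace, Fin.sum_univ_two] using htr
    simp only [uNOTapprox, trace_add, trace_smul, Matrix.trace, Fin.sum_univ_two, uNOT,
      smul_eq_mul]
    simp [Matrix.one_apply]
    linear_combination (1/3 : ℂ) * h
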